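/- arXiv:0905.0835 — 2 statements merged into one kernel-verified Lean document; each statement's English description precedes it below -/
import Mathlib

section
/- Fix β ∈ (0,1), ε > 0, and N ≥ 1. There exists a finite set M ⊂ ℤ^N such that for all x = (x_1,…,x_N) ∈ ℤ^N \ M, the quantity Δ := (Σ_{i=1}^N (2 x_i (β^{x_i} − 1) + 1 + β^{x_i})) / (1 + Σ_{i=1}^N β^{x_i}) satisfies Δ ≤ −ε. -/
/-!
Clearing the denominator, `Δ x ≤ b` becomes `∑ i, h (x i) ≤ b` with
`h n = 2n(β^n - 1) + 1 + cβ^n = (2n + c)(β^n - 1) + 1 + c` and `c = 1 - b`.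
As `n → +∞` the factor `β^n - 1` tends to `-1` while `2n + c → +∞`, and as `n → -∞` it tends to
`+∞` while `2n + c → -∞`; so `h → -∞` along the cofinite filter of `ℤ`. Such an `h` is bounded
above, hence `x ↦ ∑ i, h (x i)` tends to `-∞` along the cofinite filter of `ℤ^N`.
-/

open Filter Finset

theorem tendsto_zpow_atTop_atTop_of_one_lt {q : ℝ} (hq : 1 < q) :
    Tendsto (fun n : ℤ => q ^ n) atTop atTop := by
  rw [← Nat.map_cast_int_atTop, tendsto_map'_iff]
  simpa [Function.comp_def] using tendsto_pow_atTop_atTop_of_one_lt hq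

theorem tendsto_zpow_atTop_nhds_zero_of_lt_one {β : ℝ} (hβ0 : 0 ≤ β) (hβ1 : β < 1) :
    Tendsto (fun n : ℤ => β ^ n) atTop (nhds 0) := by
  rw [← Nat.map_cast_int_atTop, tendsto_map'_iff]
  simpa [Function.comp_def] using tendsto_pow_atTop_nhds_zero_of_lt_one hβ0 hβ1

theorem tendsto_zpow_atBot_atTop_of_lt_one {β : ℝ} (hβ0 : 0 < β) (hβ1 : β < 1) :
    Tendsto (fun n : ℤ => β ^ n) atBot atTop := by
  have hinv : Tendsto (fun n : ℤ => β⁻¹ ^ n) atTop atTop :=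
    tendsto_zpow_atTop_atTop_of_one_lt ((one_lt_inv₀ hβ0).2 hβ1)
  simpa [Function.comp_def, inv_zpow'] using hinv.comp tendsto_neg_atBot_atTop

theorem tendsto_sum_pi_cofinite_atBot {ι α R : Type*} [Fintype ι] [AddCommGroup R] [LinearOrder R]
    [IsOrderedAddMonoid R] {f : α → R} (hf : Tendsto f cofinite atBot) :
    Tendsto (fun x : ι → α => ∑ i, f (x i)) cofinite atBot := by
  classical
  obtain ⟨C, hC⟩ := hf.isBoundedUnder_le_atBot.bddAbove_range_of_cofinite
  rw [← coprodᵢ_cofinite, Filter.coprodᵢ, tendsto_iSup]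
  intro i
  refine tendsto_atBot_mono (fun x => ?_)
    (tendsto_atBot_add_const_right _ (∑ _j ∈ univ.erase i, C) (hf.comp tendsto_comap))
  rw [← add_sum_erase _ _ (mem_univ i)]
  exact add_le_add_right (sum_le_sum fun j _ => hC ⟨x j, rfl⟩) _

theorem tendsto_drift_term_cofinite_atBot {β : ℝ} (hβ0 : 0 < β) (hβ1 : β < 1) (c : ℝ) :
    Tendsto (fun n : ℤ => 2 * (n : ℝ) * (β ^ n - 1) + 1 + c * β ^ n) cofinite atBot := by
  have hlin : Tendsto (fun n : ℤ => 2 * (n : ℝ) + c) atTop atTop :=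
    tendsto_atTop_add_const_right _ c
      ((tendsto_intCast_atTop_atTop (R := ℝ)).const_mul_atTop two_pos)
  have hlin' : Tendsto (fun n : ℤ => 2 * (n : ℝ) + c) atBot atBot :=
    tendsto_atBot_add_const_right _ c
      ((tendsto_intCast_atBot_iff.2 tendsto_id).const_mul_atBot two_pos)
  have hTop : Tendsto (fun n : ℤ => (2 * (n : ℝ) + c) * (β ^ n - 1)) atTop atBot :=
    hlin.atTop_mul_neg (by norm_num)
      ((tendsto_zpow_atTop_nhds_zero_of_lt_one hβ0.le hβ1).sub_const 1)
  have hBot : Tendsto (fun n : ℤ => (2 * (n : ℝ) + c) * (β ^ n - 1)) atBot atBot :=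
    hlin'.atBot_mul_atTop₀
      (tendsto_atTop_add_const_right _ (-1) (tendsto_zpow_atBot_atTop_of_lt_one hβ0 hβ1))
  have hfactor : (fun n : ℤ => 2 * (n : ℝ) * (β ^ n - 1) + 1 + c * β ^ n) =
      fun n : ℤ => (2 * (n : ℝ) + c) * (β ^ n - 1) + (1 + c) := by
    funext n; ring
  rw [hfactor, Int.cofinite_eq, tendsto_sup]
  exact ⟨tendsto_atBot_add_const_right _ _ hBot, tendsto_atBot_add_const_right _ _ hTop⟩

/-- The drift `Δ` of `x ↦ ∑ i, x i ^ 2` at state `x`. -/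
noncomputable def sqNormDrift {ι : Type*} [Fintype ι] (β : ℝ) (x : ι → ℤ) : ℝ :=
  (∑ i, (2 * (x i : ℝ) * (β ^ (x i) - 1) + 1 + β ^ (x i))) / (1 + ∑ i, β ^ (x i))

theorem tendsto_sqNormDrift_cofinite_atBot {ι : Type*} [Fintype ι] {β : ℝ} (hβ0 : 0 < β)
    (hβ1 : β < 1) : Tendsto (sqNormDrift (ι := ι) β) cofinite atBot := by
  rw [tendsto_atBot]
  intro b
  filter_upwards [(tendsto_sum_pi_cofinite_atBot (ι := ι)
    (tendsto_drift_term_cofinite_atBot hβ0 hβ1 (1 - b))).eventually (eventually_le_atBot b)]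
    with x hx
  have hsplit : ∑ i, (2 * (x i : ℝ) * (β ^ x i - 1) + 1 + (1 - b) * β ^ x i) =
      ∑ i, (2 * (x i : ℝ) * (β ^ x i - 1) + 1 + β ^ x i) - b * ∑ i, β ^ x i := by
    rw [mul_sum, ← sum_sub_distrib]
    exact sum_congr rfl fun i _ => by ring
  have hden : 0 < 1 + ∑ i, β ^ x i := by positivity
  rw [sqNormDrift, div_le_iff₀ hden]
  linarith

theorem stmt_1_general (β ε : ℝ) (hβ0 : 0 < β) (hβ1 : β < 1)
    (N : ℕ) :
    ∃ M : Finset (Fin N → ℤ), ∀ x : Fin N → ℤ, x ∉ M →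
      (∑ i : Fin N, (2 * (x i : ℝ) * (β ^ (x i) - 1) + 1 + β ^ (x i))) /
        (1 + ∑ i : Fin N, β ^ (x i)) ≤ -ε := by
  have hfin := eventually_cofinite.1 <|
    (tendsto_sqNormDrift_cofinite_atBot (ι := Fin N) hβ0 hβ1).eventually
      (eventually_le_atBot (-ε))
  refine ⟨hfin.toFinset, fun x hx => ?_⟩
  simpa [sqNormDrift] using hx

theorem stmt_1 (β ε : ℝ) (hβ0 : 0 < β) (hβ1 : β < 1) (hε : 0 < ε)
    (N : ℕ) (hN : 1 ≤ N) :
    ∃ M : Finset (Fin N → ℤ), ∀ x : Fin N → ℤ, x ∉ M →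
      (∑ i : Fin N, (2 * (x i : ℝ) * (β ^ (x i) - 1) + 1 + β ^ (x i))) /
        (1 + ∑ i : Fin N, β ^ (x i)) ≤ -ε :=
  stmt_1_general β ε hβ0 hβ1 N
end

section
/- Let β ∈ (0,1). Consider the Markov chain ζ(t) on ℤ² with transitions from (x₁,x₂): to (x₁+1,x₂) with probability β^{x₁+x₂}/Z, to (x₁,x₂+1) with probability β^{x₂}/Z, and to (x₁−1,x₂−1) with probability β^{x₁}/Z, where Z = β^{x₁+x₂} + β^{x₂} + β^{x₁}. Let f(x₁,x₂) = β^{1−x₁−x₂} + β^{−3x₁+x₂} + β^{3x₁−4x₂} + β^{x₁+4x₂}. Then there exists C = C(β) > 0 such that whenever x₁² + x₂² > C², the expected one-step change E[f(ζ(t+1)) − f(ζ(t)) | ζ(t) = (x₁,x₂)] ≤ −(1−β). -/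
/-!
Write `u = β ^ x₁`, `v = β ^ x₂`. Multiplying the drift plus `1 - β` by the normalising constant
`Z = uv + v + u` gives `driftGain - driftLoss`, a difference of two sums of monomials `β ^ E` whose
exponents `E` are affine in `(x₁, x₂)`; the gain coefficients are at most `5 (1 - β)`, the loss
coefficients at least `1 - β`.
In the Newton polygon of `driftLoss`, every exponent of `driftGain` except `-x₁` lies in the
interior, so far from the origin each of these gain monomials is at most `β ^ n` times some loss
monomial, with `β ^ n` as small as we like. The remaining exponent `-x₁` lies on an edge; there
integrality of `(x₁, x₂)` bounds `β ^ (-x₁)` by one of the two neighbouring loss monomials, whose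
coefficient `1 - β²` exceeds `1 - β` by enough to absorb the small monomials.
-/

noncomputable def lyapunov (β : ℝ) (x : ℤ × ℤ) : ℝ :=
  β ^ (1 - x.1 - x.2) + β ^ (-3 * x.1 + x.2) + β ^ (3 * x.1 - 4 * x.2) + β ^ (x.1 + 4 * x.2)

noncomputable def driftGain (β : ℝ) (k l : ℤ) : ℝ :=
  (1 - β) * β ^ (-k) + (1 - β) + (1 - β ^ 3) * β ^ (-2 * k + 2 * l - 3)
    + (1 - β ^ 4) * β ^ (3 * k - 3 * l - 4) + (1 - β ^ 5) * β ^ (2 * k + 4 * l - 5)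
    + (1 - β) * β ^ (k + l) + (1 - β) * β ^ k + (1 - β) * β ^ l

noncomputable def driftLoss (β : ℝ) (k l : ℤ) : ℝ :=
  (1 - β ^ 2) * β ^ (1 - l) + (1 - β) * β ^ (-3 * k + 2 * l) + (1 - β ^ 2) * β ^ (-2 * k + l)
    + (1 - β ^ 3) * β ^ (4 * k - 3 * l) + (1 - β) * β ^ (4 * k - 4 * l)
    + (1 - β) * β ^ (2 * k + 5 * l) + (1 - β ^ 4) * β ^ (k + 5 * l)

def lossExponents (k l : ℤ) : List ℤ :=
  [1 - l, -3 * k + 2 * l, -2 * k + l, 4 * k - 3 * l, 4 * k - 4 * l, 2 * k + 5 * l, k + 5 * l]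

/-- The exponents of the monomials of `driftGain` other than `β ^ (-k)`. -/
def gainExponents (k l : ℤ) : List ℤ :=
  [0, -2 * k + 2 * l - 3, 3 * k - 3 * l - 4, 2 * k + 4 * l - 5, k + l, k, l]

theorem weighted_lyapunov_increments_add_eq {β : ℝ} (hβ : β ≠ 0) (k l : ℤ) :
    β ^ (k + l) * (lyapunov β (k + 1, l) - lyapunov β (k, l))
      + β ^ l * (lyapunov β (k, l + 1) - lyapunov β (k, l))
      + β ^ k * (lyapunov β (k - 1, l - 1) - lyapunov β (k, l))
      + (1 - β) * (β ^ (k + l) + β ^ l + β ^ k)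
      = driftGain β k l - driftLoss β k l := by
  have hk : β ^ k ≠ 0 := zpow_ne_zero k hβ
  have hl : β ^ l ≠ 0 := zpow_ne_zero l hβ
  simp only [lyapunov, driftGain, driftLoss, zpow_add₀ hβ, zpow_sub₀ hβ, zpow_mul', zpow_neg,
    zpow_ofNat]
  field_simp
  ring

theorem one_sub_pow_le_mul_one_sub {β : ℝ} (hβ : -1 ≤ β) (j : ℕ) :
    1 - β ^ j ≤ j * (1 - β) := by
  have h := one_add_mul_le_pow (show -2 ≤ β - 1 by linarith) j
  rw [add_sub_cancel] at h
  linarith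

theorem zpow_le_pow_mul_zpow {β : ℝ} (hβ0 : 0 < β) (hβ1 : β ≤ 1) {E F : ℤ} {n : ℕ}
    (h : F + n ≤ E) : β ^ E ≤ β ^ n * β ^ F := by
  calc β ^ E ≤ β ^ (F + n) := zpow_le_zpow_right_of_le_one₀ hβ0 hβ1 h
    _ = β ^ n * β ^ F := by rw [zpow_add₀ hβ0.ne', zpow_natCast, mul_comm]

theorem one_sub_mul_sum_le_driftLoss {β : ℝ} (hβ0 : 0 < β) (hβ1 : β ≤ 1) (k l : ℤ) :
    (1 - β) * ((lossExponents k l).map (β ^ ·)).sum ≤ driftLoss β k l := by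
  have hcoef : ∀ j ≠ 0, ∀ F : ℤ, (1 - β) * β ^ F ≤ (1 - β ^ j) * β ^ F := fun j hj F =>
    mul_le_mul_of_nonneg_right (by linarith [pow_le_of_le_one hβ0.le hβ1 hj])
      (zpow_pos hβ0 F).le
  simp only [lossExponents, driftLoss, List.map_cons, List.map_nil, List.sum_cons, List.sum_nil]
  linarith [hcoef 2 two_ne_zero (1 - l), hcoef 2 two_ne_zero (-2 * k + l),
    hcoef 3 three_ne_zero (4 * k - 3 * l), hcoef 4 four_ne_zero (k + 5 * l)]

theorem one_sub_mul_zpow_le_driftLoss {β : ℝ} (hβ0 : 0 < β) (hβ1 : β ≤ 1) {k l F : ℤ}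
    (hF : F ∈ lossExponents k l) : (1 - β) * β ^ F ≤ driftLoss β k l := by
  refine le_trans ?_ (one_sub_mul_sum_le_driftLoss hβ0 hβ1 k l)
  gcongr
  exact List.single_le_sum (by simp [fun F : ℤ => (zpow_pos hβ0 F).le]) _
    (List.mem_map_of_mem hF)

theorem driftLoss_nonneg {β : ℝ} (hβ0 : 0 < β) (hβ1 : β ≤ 1) (k l : ℤ) :
    0 ≤ driftLoss β k l :=
  le_trans (mul_nonneg (by linarith) (zpow_pos hβ0 _).le)
    (one_sub_mul_zpow_le_driftLoss hβ0 hβ1 (F := 1 - l) (by simp [lossExponents]))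

/-- `-k` lies between the loss exponents `-2k + l` and `-l`; as `k`, `l` are integers, it is at
least `-2k + l` or `1 - l`. -/
theorem one_add_mul_one_sub_mul_zpow_neg_le_driftLoss {β : ℝ} (hβ0 : 0 < β) (hβ1 : β ≤ 1)
    (k l : ℤ) : (1 + β) * ((1 - β) * β ^ (-k)) ≤ driftLoss β k l := by
  have hmono : ∀ {E F : ℤ}, F ≤ E → (1 + β) * ((1 - β) * β ^ E) ≤ (1 - β ^ 2) * β ^ F := by
    intro E F h
    have hsq : 0 ≤ 1 - β ^ 2 := by nlinarith
    calc (1 + β) * ((1 - β) * β ^ E) = (1 - β ^ 2) * β ^ E := by ring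
      _ ≤ (1 - β ^ 2) * β ^ F :=
          mul_le_mul_of_nonneg_left (zpow_le_zpow_right_of_le_one₀ hβ0 hβ1 h) hsq
  have hnn : ∀ (j : ℕ) (F : ℤ), 0 ≤ (1 - β ^ j) * β ^ F := fun j F =>
    mul_nonneg (by linarith [pow_le_one₀ hβ0.le hβ1 (n := j)]) (zpow_pos hβ0 F).le
  unfold driftLoss
  rcases le_or_gt l k with h | h
  · linarith [hmono (show -2 * k + l ≤ -k by omega), hnn 2 (1 - l), hnn 1 (-3 * k + 2 * l),
      hnn 3 (4 * k - 3 * l), hnn 1 (4 * k - 4 * l), hnn 1 (2 * k + 5 * l), hnn 4 (k + 5 * l)]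
  · linarith [hmono (show 1 - l ≤ -k by omega), hnn 2 (-2 * k + l), hnn 1 (-3 * k + 2 * l),
      hnn 3 (4 * k - 3 * l), hnn 1 (4 * k - 4 * l), hnn 1 (2 * k + 5 * l), hnn 4 (k + 5 * l)]

theorem exists_lossExponents_add_le (n : ℕ) (k l : ℤ)
    (hkl : 10 * (n + 3) ≤ |k| ∨ 10 * (n + 3) ≤ |l|) :
    ∀ E ∈ gainExponents k l, ∃ F ∈ lossExponents k l, F + n ≤ E := by
  simp only [gainExponents, lossExponents, List.mem_cons, List.not_mem_nil, or_false,
    forall_eq_or_imp, exists_eq_or_imp, forall_eq]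
  rw [le_abs, le_abs] at hkl
  refine ⟨?_, ?_, ?_, ?_, ?_, ?_, ?_⟩ <;> omega

theorem driftGain_le_driftLoss {β : ℝ} (hβ0 : 0 < β) (hβ1 : β ≤ 1) {n : ℕ}
    (hn : β ^ n ≤ β / 70) {k l : ℤ} (hkl : 10 * (n + 3) ≤ |k| ∨ 10 * (n + 3) ≤ |l|) :
    driftGain β k l ≤ driftLoss β k l := by
  have hdom : ∀ {j : ℕ} {E : ℤ}, j ≤ 5 → E ∈ gainExponents k l →
      (1 - β ^ j) * β ^ E ≤ 5 * β ^ n * driftLoss β k l := by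
    intro j E hj hE
    obtain ⟨F, hF, hFE⟩ := exists_lossExponents_add_le n k l hkl E hE
    have hc : 1 - β ^ j ≤ 5 * (1 - β) :=
      (one_sub_pow_le_mul_one_sub (by linarith) j).trans
        (mul_le_mul_of_nonneg_right (by exact_mod_cast hj) (by linarith))
    calc (1 - β ^ j) * β ^ E ≤ 5 * (1 - β) * (β ^ n * β ^ F) :=
          mul_le_mul hc (zpow_le_pow_mul_zpow hβ0 hβ1 hFE) (zpow_pos hβ0 E).le (by linarith)
      _ = 5 * β ^ n * ((1 - β) * β ^ F) := by ring
      _ ≤ 5 * β ^ n * driftLoss β k l := by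
          gcongr
          exact one_sub_mul_zpow_le_driftLoss hβ0 hβ1 hF
  have hrest : driftGain β k l - (1 - β) * β ^ (-k) ≤ 35 * β ^ n * driftLoss β k l := by
    have hone : ∀ {E : ℤ}, E ∈ gainExponents k l →
        (1 - β) * β ^ E ≤ 5 * β ^ n * driftLoss β k l :=
      fun hE => by simpa using hdom (j := 1) (by norm_num) hE
    have h0 := hone (E := 0) (by simp [gainExponents])
    rw [zpow_zero, mul_one] at h0
    simp only [driftGain]
    linarith [hdom (j := 3) (E := -2 * k + 2 * l - 3) (by norm_num) (by simp [gainExponents]),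
      hdom (j := 4) (E := 3 * k - 3 * l - 4) (by norm_num) (by simp [gainExponents]),
      hdom (j := 5) (E := 2 * k + 4 * l - 5) (by norm_num) (by simp [gainExponents]),
      hone (E := k + l) (by simp [gainExponents]), hone (E := k) (by simp [gainExponents]),
      hone (E := l) (by simp [gainExponents])]
  have hsmall : (1 + β) * (35 * β ^ n) ≤ β := by nlinarith
  have hloss := driftLoss_nonneg hβ0 hβ1 k l
  have hedge := one_add_mul_one_sub_mul_zpow_neg_le_driftLoss hβ0 hβ1 k l
  refine le_of_mul_le_mul_left ?_ (by linarith : 0 < 1 + β)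
  nlinarith [mul_le_mul_of_nonneg_left hrest (by linarith : 0 ≤ 1 + β),
    mul_le_mul_of_nonneg_right hsmall hloss]

theorem le_abs_or_le_abs_of_sq_add_sq_gt {a b R : ℝ} (h : (2 * R) ^ 2 < a ^ 2 + b ^ 2) :
    R ≤ |a| ∨ R ≤ |b| := by
  by_contra! hab
  nlinarith [abs_nonneg a, abs_nonneg b, sq_abs a, sq_abs b]

/-- Lemma 1 of the paper: Lyapunov drift bound for the asymmetric chain, `N = 2`. -/
theorem stmt_5 (β : ℝ) (hβ0 : 0 < β) (hβ1 : β < 1)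
    (f : ℤ × ℤ → ℝ)
    (hf : ∀ x : ℤ × ℤ, f x = β ^ (1 - x.1 - x.2) + β ^ (-3 * x.1 + x.2)
        + β ^ (3 * x.1 - 4 * x.2) + β ^ (x.1 + 4 * x.2)) :
    ∃ C > (0 : ℝ), ∀ x₁ x₂ : ℤ, ((x₁ : ℝ)^2 + (x₂ : ℝ)^2 > C^2) →
      (β ^ (x₁ + x₂) / (β ^ (x₁ + x₂) + β ^ x₂ + β ^ x₁)) * (f (x₁ + 1, x₂) - f (x₁, x₂))
      + (β ^ x₂ / (β ^ (x₁ + x₂) + β ^ x₂ + β ^ x₁)) * (f (x₁, x₂ + 1) - f (x₁, x₂))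
      + (β ^ x₁ / (β ^ (x₁ + x₂) + β ^ x₂ + β ^ x₁)) * (f (x₁ - 1, x₂ - 1) - f (x₁, x₂))
      ≤ -(1 - β) := by
  obtain rfl : f = lyapunov β := funext hf
  obtain ⟨n, hn⟩ := exists_pow_lt_of_lt_one (by positivity : 0 < β / 70) hβ1
  refine ⟨2 * (10 * (n + 3)), by positivity, fun k l hx => ?_⟩
  have hfar : 10 * (n + 3) ≤ |k| ∨ 10 * (n + 3) ≤ |l| := by
    exact_mod_cast le_abs_or_le_abs_of_sq_add_sq_gt hx
  have hZ : 0 < β ^ (k + l) + β ^ l + β ^ k := by positivity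
  rw [div_mul_eq_mul_div, div_mul_eq_mul_div, div_mul_eq_mul_div, ← add_div, ← add_div,
    div_le_iff₀ hZ]
  linarith [weighted_lyapunov_increments_add_eq hβ0.ne' k l,
    driftGain_le_driftLoss hβ0 hβ1.le hn.le hfar]
end
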